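/- Suppose for every 0 ≤ m ≤ N/L−1 the R × L matrix A_m = (β_r(m + jN/L))_{1≤r≤R, 0≤j≤L−1} has rank L. Then the magnitudes |x(n)|, 0 ≤ n ≤ N−1, of any signal x ∈ ℂ^N are uniquely determined by the magnitude measurements |X_{w_r}(Lm,k)| (1 ≤ r ≤ R, 0 ≤ m ≤ N/L−1, 0 ≤ k ≤ N−1) of its multiple-window STFT. That is, if y ∈ ℂ^N has the same magnitude measurements as x, then |y(n)| = |x(n)| for all n. -/

import Mathlib

/-- Multiple-window short-time Fourier transform. -/
noncomputable def stft {N : ℕ} [NeZero N] (L : ℕ) (x w : ZMod N → ℂ) (m k : ℕ) : ℂ :=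
  (N : ℂ)⁻¹ * ∑ n : ZMod N, x n * w (((L * m : ℕ) : ZMod N) - n) *
    Complex.exp (-(2 * Real.pi * Complex.I * (k : ℂ) * (n.val : ℂ)) / (N : ℂ))

/-- DFT of the squared magnitudes of a vector: `(1/N) ∑_n |u(n)|² e^{-2πikn/N}`. -/
noncomputable def dftSq {N : ℕ} [NeZero N] (u : ZMod N → ℂ) (k : ℕ) : ℂ :=
  (N : ℂ)⁻¹ * ∑ n : ZMod N, (‖u n‖ ^ 2 : ℝ) *
    Complex.exp (-(2 * Real.pi * Complex.I * (k : ℂ) * (n.val : ℂ)) / (N : ℂ))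

/-!
By Parseval, the energy `∑ₖ |X_{w_r}(Lm,k)|²` of the `m`-th frame is
`N⁻¹ ∑ₙ |x n|² |w_r (Lm - n)|²`, the sample at `Lm` of the cyclic convolution of `|x|²` with
`|w_r|²`. By the convolution theorem and aliasing, the DFT in `m` of these `N/L` samples is, up to
a constant, `∑ⱼ β_r(p + jN/L) · (DFT of |x|²)(p + jN/L)`, i.e. the `r`-th entry of `A_p v_p`, where
`v_p` is the DFT of `|x|²` on the coset `p + (N/L)ℤ`. Since `A_p` has rank `L`, the measurements
determine every `v_p`, hence the DFT of `|x|²`, hence `|x|`.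
-/

open Finset ZMod
open scoped Matrix

namespace ZMod

variable {N : ℕ} [NeZero N]

theorem sum_range_natCast {M : Type*} [AddCommMonoid M] (f : ZMod N → M) :
    ∑ k ∈ range N, f k = ∑ k : ZMod N, f k := by
  refine sum_nbij' (fun k => (k : ZMod N)) ZMod.val (by simp) (by simp [ZMod.val_lt])
    (fun k hk => ZMod.val_cast_of_lt (mem_range.mp hk)) (fun k _ => natCast_zmod_val k) (by simp)

theorem conj_stdAddChar (a : ZMod N) : (starRingEnd ℂ) (stdAddChar a) = stdAddChar (-a) := by
  rw [stdAddChar_apply, stdAddChar_apply, AddChar.map_neg_eq_inv, Circle.coe_inv_eq_conj]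

theorem sum_stdAddChar_mul (b : ZMod N) :
    ∑ k : ZMod N, stdAddChar (k * b) = if b = 0 then (N : ℂ) else 0 := by
  rw [AddChar.sum_mulShift b (isPrimitive_stdAddChar N), ZMod.card, Nat.cast_ite, Nat.cast_zero]

theorem sum_norm_sq_dft (Φ : ZMod N → ℂ) :
    ∑ k, ‖𝓕 Φ k‖ ^ 2 = N * ∑ j, ‖Φ j‖ ^ 2 := by
  have hsq : ∀ z : ℂ, ((‖z‖ ^ 2 : ℝ) : ℂ) = z * (starRingEnd ℂ) z := fun z => by
    rw [Complex.mul_conj, Complex.normSq_eq_norm_sq]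
  have hexpand : ∀ k, 𝓕 Φ k * (starRingEnd ℂ) (𝓕 Φ k) = ∑ j, ∑ j',
      stdAddChar (k * (j' - j)) * (Φ j * (starRingEnd ℂ) (Φ j')) := fun k => by
    simp only [dft_apply, smul_eq_mul, map_sum, map_mul, conj_stdAddChar, sum_mul_sum]
    refine sum_congr rfl fun j _ => sum_congr rfl fun j' _ => ?_
    rw [mul_sub, sub_eq_add_neg, AddChar.map_add_eq_mul, neg_neg, mul_comm k, mul_comm k]
    ring
  apply Complex.ofReal_injective
  push_cast
  simp only [← Complex.ofReal_pow, hsq, hexpand, mul_sum]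
  rw [sum_comm]
  refine sum_congr rfl fun j _ => ?_
  rw [sum_comm]
  simp only [← sum_mul, sum_stdAddChar_mul, sub_eq_zero, ite_mul, zero_mul, sum_ite_eq',
    mem_univ, if_true]

def cyclicConv (a b : ZMod N → ℂ) (t : ZMod N) : ℂ := ∑ n, a n * b (t - n)

theorem dft_cyclicConv (a b : ZMod N → ℂ) (k : ZMod N) :
    𝓕 (cyclicConv a b) k = 𝓕 a k * 𝓕 b k := by
  rw [dft_apply, dft_apply, dft_apply, sum_mul_sum]
  simp only [cyclicConv, smul_eq_mul, mul_sum]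
  conv_lhs => rw [sum_comm]
  refine sum_congr rfl fun n _ => Fintype.sum_equiv (Equiv.subRight n) _ _ fun t => ?_
  rw [Equiv.subRight_apply, show -(t * k) = -(n * k) + -((t - n) * k) by ring,
    AddChar.map_add_eq_mul]
  ring

theorem sum_range_stdAddChar_mul {L M : ℕ} (hLM : L * M = N) (t : ZMod N) :
    ∑ j ∈ range L, stdAddChar (-(t * ((j * M : ℕ) : ZMod N))) =
      if L ∣ t.val then (L : ℂ) else 0 := by
  set ζ : ℂ := stdAddChar (-(t * (M : ZMod N)))
  have hpow : ∀ j : ℕ, stdAddChar (-(t * ((j * M : ℕ) : ZMod N))) = ζ ^ j := fun j => by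
    rw [← AddChar.map_nsmul_eq_pow, nsmul_eq_mul]
    push_cast
    ring_nf
  have hM : 0 < M := Nat.pos_of_mul_pos_left (by rw [hLM]; exact Nat.pos_of_neZero N)
  have hζ : ζ = 1 ↔ L ∣ t.val := by
    have hcast : t * (M : ZMod N) = ((t.val * M : ℕ) : ZMod N) := by
      rw [Nat.cast_mul, natCast_zmod_val]
    rw [← AddChar.map_zero_eq_one (stdAddChar (N := N)), injective_stdAddChar.eq_iff,
      neg_eq_zero, hcast, ZMod.natCast_eq_zero_iff, ← Nat.mul_dvd_mul_iff_right hM (a := L)]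
    rw [hLM]
  simp only [hpow]
  split_ifs with h
  · simp [hζ.mpr h]
  · have hζL : ζ ^ L = 1 := by
      rw [← hpow, hLM, ZMod.natCast_self, mul_zero, neg_zero, AddChar.map_zero_eq_one]
    rw [geom_sum_eq (mt hζ.mp h), hζL, sub_self, zero_div]

theorem sum_ite_dvd_val {E : Type*} [AddCommMonoid E] {L M : ℕ} (hLM : L * M = N)
    (g : ZMod N → E) :
    ∑ t : ZMod N, (if L ∣ t.val then g t else 0) = ∑ m ∈ range M, g (L * m : ℕ) := by
  have hL : 0 < L := Nat.pos_of_mul_pos_right (by rw [hLM]; exact Nat.pos_of_neZero N)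
  have hval : ∀ m ∈ range M, ((L * m : ℕ) : ZMod N).val = L * m := fun m hm =>
    ZMod.val_cast_of_lt (hLM ▸ Nat.mul_lt_mul_of_pos_left (mem_range.mp hm) hL)
  rw [← sum_filter]
  refine sum_nbij' (fun t => t.val / L) (fun m => (L * m : ℕ)) ?_ ?_ ?_ ?_ ?_
  · intro t _
    rw [mem_range, Nat.div_lt_iff_lt_mul hL, mul_comm, hLM]
    exact ZMod.val_lt t
  · intro m hm
    rw [mem_filter, hval m hm]
    exact ⟨mem_univ _, dvd_mul_right L m⟩
  · intro t ht
    have ht : L ∣ t.val := (mem_filter.mp ht).2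
    rw [Nat.mul_div_cancel' ht, natCast_zmod_val]
  · intro m hm
    rw [hval m hm, Nat.mul_div_cancel_left m hL]
  · intro t ht
    have ht : L ∣ t.val := (mem_filter.mp ht).2
    rw [Nat.mul_div_cancel' ht, natCast_zmod_val]

/-- Aliasing: summing `𝓕 Φ` over a coset of `M ℤ / N ℤ` only sees `Φ` on `L ℤ / N ℤ`. -/
theorem sum_dft_add_mul {L M : ℕ} (hLM : L * M = N) (Φ : ZMod N → ℂ) (p : ZMod N) :
    ∑ j ∈ range L, 𝓕 Φ (p + ((j * M : ℕ) : ZMod N)) =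
      L * ∑ m ∈ range M, stdAddChar (-(((L * m : ℕ) : ZMod N) * p)) * Φ (L * m : ℕ) := by
  simp only [dft_apply, smul_eq_mul]
  rw [sum_comm]
  have hsplit : ∀ t : ZMod N,
      ∑ j ∈ range L, stdAddChar (-(t * (p + ((j * M : ℕ) : ZMod N)))) * Φ t
        = if L ∣ t.val then L * (stdAddChar (-(t * p)) * Φ t) else 0 := fun t => by
    simp only [mul_add, neg_add, AddChar.map_add_eq_mul, mul_assoc, ← mul_sum]
    rw [mul_comm, ← sum_mul, sum_range_stdAddChar_mul hLM, ite_mul, zero_mul]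
    split_ifs <;> ring
  simp only [hsplit, sum_ite_dvd_val hLM, mul_sum]

end ZMod

theorem Matrix.mulVec_injective_of_rank_eq_card {m n K : Type*} [Fintype n] [Field K]
    (A : Matrix m n K) (h : A.rank = Fintype.card n) : Function.Injective A.mulVec := by
  have hker : Module.finrank K (LinearMap.ker A.mulVecLin) = 0 := by
    have := LinearMap.finrank_range_add_finrank_ker A.mulVecLin
    rw [Module.finrank_fintype_fun_eq_card] at this
    unfold Matrix.rank at h
    omega
  rw [← Matrix.coe_mulVecLin, ← LinearMap.ker_eq_bot, ← Submodule.finrank_eq_zero, hker]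

section STFT

variable {N : ℕ} [NeZero N]

noncomputable def sqNorm (u : ZMod N → ℂ) (n : ZMod N) : ℂ := (‖u n‖ ^ 2 : ℝ)

theorem exp_eq_stdAddChar (k : ℕ) (n : ZMod N) :
    Complex.exp (-(2 * Real.pi * Complex.I * (k : ℂ) * (n.val : ℂ)) / (N : ℂ)) =
      stdAddChar (-(n * (k : ZMod N))) := by
  have hcast : -(n * (k : ZMod N)) = ((-(n.val * k) : ℤ) : ZMod N) := by
    push_cast [natCast_zmod_val]
    rfl
  rw [hcast, stdAddChar_coe]
  push_cast
  ring_nf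

theorem stft_eq_dft (L : ℕ) (x w : ZMod N → ℂ) (m k : ℕ) :
    stft L x w m k = (N : ℂ)⁻¹ * 𝓕 (fun n => x n * w ((L * m : ℕ) - n)) k := by
  rw [stft, dft_apply]
  congr 1
  exact sum_congr rfl fun n _ => by rw [exp_eq_stdAddChar, smul_eq_mul, mul_comm]

theorem dftSq_eq_dft (u : ZMod N → ℂ) (k : ℕ) : dftSq u k = (N : ℂ)⁻¹ * 𝓕 (sqNorm u) k := by
  rw [dftSq, dft_apply]
  congr 1
  exact sum_congr rfl fun n _ => by rw [exp_eq_stdAddChar, smul_eq_mul, mul_comm, sqNorm]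

theorem sum_norm_sq_stft (L : ℕ) (x w : ZMod N → ℂ) (m : ℕ) :
    ∑ k ∈ range N, ‖stft L x w m k‖ ^ 2 =
      (N : ℝ)⁻¹ * ∑ n, ‖x n‖ ^ 2 * ‖w ((L * m : ℕ) - n)‖ ^ 2 := by
  simp only [stft_eq_dft, norm_mul, mul_pow, ← mul_sum]
  rw [sum_range_natCast (fun k => ‖𝓕 (fun n => x n * w ((L * m : ℕ) - n)) k‖ ^ 2),
    sum_norm_sq_dft, norm_inv, Complex.norm_natCast]
  simp only [norm_mul, mul_pow]
  field_simp

theorem cyclicConv_sqNorm_eq_sum_norm_sq_stft (L : ℕ) (x w : ZMod N → ℂ) (m : ℕ) :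
    cyclicConv (sqNorm x) (sqNorm w) (L * m : ℕ) =
      N * ((∑ k ∈ range N, ‖stft L x w m k‖ ^ 2 : ℝ) : ℂ) := by
  have hN : (N : ℂ) ≠ 0 := NeZero.ne _
  rw [sum_norm_sq_stft]
  push_cast
  rw [← mul_assoc, mul_inv_cancel₀ hN, one_mul]
  simp [cyclicConv, sqNorm]

theorem sum_dftSq_mul_dftSq {L M : ℕ} (hLM : L * M = N) (x w : ZMod N → ℂ) (p : ℕ) :
    ∑ j ∈ range L, dftSq w (p + j * M) * dftSq x (p + j * M) =
      L / N * ∑ m ∈ range M, stdAddChar (-(((L * m : ℕ) : ZMod N) * (p : ZMod N))) *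
        ((∑ k ∈ range N, ‖stft L x w m k‖ ^ 2 : ℝ) : ℂ) := by
  have hprod : ∀ j : ℕ, dftSq w (p + j * M) * dftSq x (p + j * M) =
      (N : ℂ)⁻¹ ^ 2 * 𝓕 (cyclicConv (sqNorm x) (sqNorm w)) ((p : ZMod N) + (j * M : ℕ)) := by
    intro j
    rw [dftSq_eq_dft, dftSq_eq_dft, dft_cyclicConv, ← Nat.cast_add]
    ring
  simp only [hprod, ← mul_sum, sum_dft_add_mul hLM, cyclicConv_sqNorm_eq_sum_norm_sq_stft]
  rw [← mul_assoc, mul_sum, mul_sum]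
  refine sum_congr rfl fun m _ => ?_
  field_simp

theorem mulVec_dftSq_eq_of_norm_stft_eq {ι : Type*} [Fintype ι] {L M : ℕ} (hLM : L * M = N)
    (w : ι → ZMod N → ℂ) (x y : ZMod N → ℂ)
    (h : ∀ r, ∀ m < M, ∀ k < N, ‖stft L y (w r) m k‖ = ‖stft L x (w r) m k‖) (p : ℕ) :
    (Matrix.of fun r (j : Fin L) => dftSq (w r) (p + j.1 * M)) *ᵥ
        (fun j => dftSq y (p + j.1 * M)) =
      (Matrix.of fun r (j : Fin L) => dftSq (w r) (p + j.1 * M)) *ᵥ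
        (fun j => dftSq x (p + j.1 * M)) := by
  ext r
  simp only [Matrix.mulVec, dotProduct, Matrix.of_apply]
  rw [Fin.sum_univ_eq_sum_range (fun j => dftSq (w r) (p + j * M) * dftSq y (p + j * M)),
    Fin.sum_univ_eq_sum_range (fun j => dftSq (w r) (p + j * M) * dftSq x (p + j * M)),
    sum_dftSq_mul_dftSq hLM, sum_dftSq_mul_dftSq hLM]
  congr 1
  refine sum_congr rfl fun m hm => ?_
  have hmeas :
      ∑ k ∈ range N, ‖stft L y (w r) m k‖ ^ 2 = ∑ k ∈ range N, ‖stft L x (w r) m k‖ ^ 2 :=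
    sum_congr rfl fun k hk => by rw [h r m (mem_range.mp hm) k (mem_range.mp hk)]
  rw [hmeas]

theorem norm_eq_of_dftSq_eq (u v : ZMod N → ℂ) (h : ∀ k < N, dftSq u k = dftSq v k)
    (n : ZMod N) : ‖u n‖ = ‖v n‖ := by
  have hdft : 𝓕 (sqNorm u) = 𝓕 (sqNorm v) := funext fun k => by
    have := h k.val (ZMod.val_lt k)
    rwa [dftSq_eq_dft, dftSq_eq_dft, natCast_zmod_val,
      mul_right_inj' (inv_ne_zero (NeZero.ne (N : ℂ)))] at this
  have hsq := Complex.ofReal_injective (congrFun (dft.injective hdft) n)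
  exact (pow_left_inj₀ (norm_nonneg _) (norm_nonneg _) two_ne_zero).mp hsq

end STFT

theorem stmt7_general (N L R : ℕ) [NeZero N] (hdvd : L ∣ N)
    (w : Fin R → ZMod N → ℂ)
    (hrank : ∀ m < N / L,
      Matrix.rank (Matrix.of fun (r : Fin R) (j : Fin L) =>
        dftSq (w r) (m + j.1 * (N / L))) = L) :
    ∀ x y : ZMod N → ℂ,
      (∀ r : Fin R, ∀ m < N / L, ∀ k < N,
        ‖stft L y (w r) m k‖ = ‖stft L x (w r) m k‖) →
      ∀ n : ZMod N, ‖y n‖ = ‖x n‖ := by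
  intro x y hmeas
  have hLM : L * (N / L) = N := Nat.mul_div_cancel' hdvd
  have hM : 0 < N / L := Nat.pos_of_mul_pos_left (by rw [hLM]; exact Nat.pos_of_neZero N)
  refine norm_eq_of_dftSq_eq y x fun k hk => ?_
  set p := k % (N / L)
  have hj : k / (N / L) < L := Nat.div_lt_of_lt_mul (by rwa [mul_comm, hLM])
  have hvec := Matrix.mulVec_injective_of_rank_eq_card _
    (by simpa using hrank p (Nat.mod_lt k hM)) (mulVec_dftSq_eq_of_norm_stft_eq hLM w x y hmeas p)
  simpa [p, Nat.mod_add_div'] using congrFun hvec ⟨k / (N / L), hj⟩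

/-- If every matrix `A_m = (β_r(m + jN/L))` has rank `L`, then the magnitudes of any
signal are uniquely determined by the magnitude measurements of its multiple-window STFT. -/
theorem stmt7 (N L R : ℕ) [NeZero N] (hL : 0 < L) (hR : 0 < R) (hdvd : L ∣ N)
    (w : Fin R → ZMod N → ℂ)
    (hrank : ∀ m < N / L,
      Matrix.rank (Matrix.of fun (r : Fin R) (j : Fin L) =>
        dftSq (w r) (m + j.1 * (N / L))) = L) :
    ∀ x y : ZMod N → ℂ,
      (∀ r : Fin R, ∀ m < N / L, ∀ k < N,
        ‖stft L y (w r) m k‖ = ‖stft L x (w r) m k‖) →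
      ∀ n : ZMod N, ‖y n‖ = ‖x n‖ :=
  stmt7_general N L R hdvd w hrank
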